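/- For every closed μL'f formula φ' and every product p, the singleton family {p} satisfies φ' with respect to the FTS F if and only if p satisfies fm(φ') with respect to F. -/

import Mathlib

/-!
For a fixed product `p`, both semantics, sliced at `p` (resp. at the singleton family `{p}`),
agree with the μ-calculus semantics of `φ.sm p` on the projected LTS `F.proj p`. On a singleton
family the family modalities only ever pass on `{p} ∩ χ ∩ θ`, which is `{p}` or empty, so they act
like the product modalities at `p`. Slicing is the preimage under an injection of the state space;
it commutes with the Boolean connectives and, since every set of states is the preimage of a
largest and of a smallest set, with the Knaster–Tarski fixpoints even for non-monotone bodies.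
-/

namespace SPLmu

/-- A feature transition system: `theta s a t` is the feature expression
(identified with the set of products satisfying it) guarding the transition. -/
structure FTS (S A P : Type) where
  theta : S → A → S → Set P
  init : S

/-- A labeled transition system. -/
structure LTS (S A : Type) where
  trans : S → A → S → Prop
  init : S

/-- Projection of an FTS onto a product. -/
def FTS.proj {S A P : Type} (F : FTS S A P) (p : P) : LTS S A :=
  ⟨fun s a t => p ∈ F.theta s a t, F.init⟩

/-- Knaster–Tarski least (pre)fixpoint. -/
def slfp {α : Type} (f : Set α → Set α) : Set α := ⋂₀ {V | f V ⊆ V}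

/-- Knaster–Tarski greatest (post)fixpoint. -/
def sgfp {α : Type} (f : Set α → Set α) : Set α := ⋃₀ {V | V ⊆ f V}

/-- The modal mu-calculus μL. -/
inductive MuL (A X : Type) : Type where
  | bot | top
  | neg : MuL A X → MuL A X
  | or  : MuL A X → MuL A X → MuL A X
  | and : MuL A X → MuL A X → MuL A X
  | dia : A → MuL A X → MuL A X
  | box : A → MuL A X → MuL A X
  | var : X → MuL A X
  | mu  : X → MuL A X → MuL A X
  | nu  : X → MuL A X → MuL A X

/-- The feature mu-calculus μLf (also used as the syntax of μL'f, whose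
modality ⟪a|χ⟫ corresponds to `dia`; the translation `fm` is then the identity). -/
inductive MuLf (A X P : Type) : Type where
  | bot | top
  | neg : MuLf A X P → MuLf A X P
  | or  : MuLf A X P → MuLf A X P → MuLf A X P
  | and : MuLf A X P → MuLf A X P → MuLf A X P
  | dia : A → Set P → MuLf A X P → MuLf A X P
  | box : A → Set P → MuLf A X P → MuLf A X P
  | var : X → MuLf A X P
  | mu  : X → MuLf A X P → MuLf A X P
  | nu  : X → MuLf A X P → MuLf A X P

variable {S A X P : Type}

/-- Standard μL semantics over an LTS. -/
def MuL.sem [DecidableEq X] (L : LTS S A) : MuL A X → (X → Set S) → Set S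
  | .bot, _ => ∅
  | .top, _ => Set.univ
  | .neg φ, ε => (MuL.sem L φ ε)ᶜ
  | .or φ ψ, ε => MuL.sem L φ ε ∪ MuL.sem L ψ ε
  | .and φ ψ, ε => MuL.sem L φ ε ∩ MuL.sem L ψ ε
  | .dia a φ, ε => {s | ∃ t, L.trans s a t ∧ t ∈ MuL.sem L φ ε}
  | .box a φ, ε => {s | ∀ t, L.trans s a t → t ∈ MuL.sem L φ ε}
  | .var x, ε => ε x
  | .mu x φ, ε => slfp (fun V => MuL.sem L φ (Function.update ε x V))
  | .nu x φ, ε => sgfp (fun V => MuL.sem L φ (Function.update ε x V))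

/-- Product-based μLf semantics over an FTS (sets of state-product pairs). -/
def MuLf.sem [DecidableEq X] (F : FTS S A P) : MuLf A X P → (X → Set (S × P)) → Set (S × P)
  | .bot, _ => ∅
  | .top, _ => Set.univ
  | .neg φ, η => (MuLf.sem F φ η)ᶜ
  | .or φ ψ, η => MuLf.sem F φ η ∪ MuLf.sem F ψ η
  | .and φ ψ, η => MuLf.sem F φ η ∩ MuLf.sem F ψ η
  | .dia a χ φ, η =>
      {sp | sp.2 ∈ χ ∧ ∃ t, sp.2 ∈ F.theta sp.1 a t ∧ (t, sp.2) ∈ MuLf.sem F φ η}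
  | .box a χ φ, η =>
      {sp | sp.2 ∈ χ → ∀ t, sp.2 ∈ F.theta sp.1 a t → (t, sp.2) ∈ MuLf.sem F φ η}
  | .var x, η => η x
  | .mu x φ, η => slfp (fun V => MuLf.sem F φ (Function.update η x V))
  | .nu x φ, η => sgfp (fun V => MuLf.sem F φ (Function.update η x V))

/-- Family-based μL'f semantics over an FTS (sets of state-family pairs);
here `dia` plays the role of the family modality ⟪a|χ⟫. -/
def MuLf.fsem [DecidableEq X] (F : FTS S A P) :
    MuLf A X P → (X → Set (S × Set P)) → Set (S × Set P)
  | .bot, _ => ∅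
  | .top, _ => Set.univ
  | .neg φ, ζ => (MuLf.fsem F φ ζ)ᶜ
  | .or φ ψ, ζ => MuLf.fsem F φ ζ ∪ MuLf.fsem F ψ ζ
  | .and φ ψ, ζ => MuLf.fsem F φ ζ ∩ MuLf.fsem F ψ ζ
  | .dia a χ φ, ζ =>
      {sP | sP.2 ⊆ χ ∧ ∃ t, sP.2 ⊆ F.theta sP.1 a t ∧
        (t, sP.2 ∩ χ ∩ F.theta sP.1 a t) ∈ MuLf.fsem F φ ζ}
  | .box a χ φ, ζ =>
      {sP | (sP.2 ∩ χ).Nonempty → ∀ t, (sP.2 ∩ χ ∩ F.theta sP.1 a t).Nonempty →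
        (t, sP.2 ∩ χ ∩ F.theta sP.1 a t) ∈ MuLf.fsem F φ ζ}
  | .var x, ζ => ζ x
  | .mu x φ, ζ => slfp (fun W => MuLf.fsem F φ (Function.update ζ x W))
  | .nu x φ, ζ => sgfp (fun W => MuLf.fsem F φ (Function.update ζ x W))

-- The translation sm : μLf × 𝒫 → μL.
open Classical in
noncomputable def MuLf.sm : MuLf A X P → P → MuL A X
  | .bot, _ => .bot
  | .top, _ => .top
  | .neg φ, p => .neg (MuLf.sm φ p)
  | .or φ ψ, p => .or (MuLf.sm φ p) (MuLf.sm ψ p)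
  | .and φ ψ, p => .and (MuLf.sm φ p) (MuLf.sm ψ p)
  | .dia a χ φ, p => if p ∈ χ then .dia a (MuLf.sm φ p) else .bot
  | .box a χ φ, p => if p ∈ χ then .box a (MuLf.sm φ p) else .top
  | .var x, _ => .var x
  | .mu x φ, p => .mu x (MuLf.sm φ p)
  | .nu x φ, p => .nu x (MuLf.sm φ p)

/-- Free variables of a μLf formula. -/
def MuLf.fv : MuLf A X P → Set X
  | .bot => ∅
  | .top => ∅
  | .neg φ => MuLf.fv φ
  | .or φ ψ => MuLf.fv φ ∪ MuLf.fv ψ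
  | .and φ ψ => MuLf.fv φ ∪ MuLf.fv ψ
  | .dia _ _ φ => MuLf.fv φ
  | .box _ _ φ => MuLf.fv φ
  | .var x => {x}
  | .mu x φ => MuLf.fv φ \ {x}
  | .nu x φ => MuLf.fv φ \ {x}

/-- A μLf formula is closed if it has no free variables. -/
def MuLf.closed (φ : MuLf A X P) : Prop := MuLf.fv φ = ∅

/-- Negation-free μLf formulas. -/
def MuLf.negFree : MuLf A X P → Prop
  | .bot => True
  | .top => True
  | .neg _ => False
  | .or φ ψ => MuLf.negFree φ ∧ MuLf.negFree ψ
  | .and φ ψ => MuLf.negFree φ ∧ MuLf.negFree ψ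
  | .dia _ _ φ => MuLf.negFree φ
  | .box _ _ φ => MuLf.negFree φ
  | .var _ => True
  | .mu _ φ => MuLf.negFree φ
  | .nu _ φ => MuLf.negFree φ

/-- Diamond-free μLf formulas (no ⟨a|χ⟩ / ⟪a|χ⟫). -/
def MuLf.diaFree : MuLf A X P → Prop
  | .bot => True
  | .top => True
  | .neg φ => MuLf.diaFree φ
  | .or φ ψ => MuLf.diaFree φ ∧ MuLf.diaFree ψ
  | .and φ ψ => MuLf.diaFree φ ∧ MuLf.diaFree ψ
  | .dia _ _ _ => False
  | .box _ _ φ => MuLf.diaFree φ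
  | .var _ => True
  | .mu _ φ => MuLf.diaFree φ
  | .nu _ φ => MuLf.diaFree φ

mutual
/-- All free occurrences of `x` are under an even number of negations. -/
def MuLf.posIn (x : X) : MuLf A X P → Prop
  | .bot => True
  | .top => True
  | .neg φ => MuLf.negOcc x φ
  | .or φ ψ => MuLf.posIn x φ ∧ MuLf.posIn x ψ
  | .and φ ψ => MuLf.posIn x φ ∧ MuLf.posIn x ψ
  | .dia _ _ φ => MuLf.posIn x φ
  | .box _ _ φ => MuLf.posIn x φ
  | .var _ => True
  | .mu y φ => y = x ∨ MuLf.posIn x φ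
  | .nu y φ => y = x ∨ MuLf.posIn x φ

/-- All free occurrences of `x` are under an odd number of negations. -/
def MuLf.negOcc (x : X) : MuLf A X P → Prop
  | .bot => True
  | .top => True
  | .neg φ => MuLf.posIn x φ
  | .or φ ψ => MuLf.negOcc x φ ∧ MuLf.negOcc x ψ
  | .and φ ψ => MuLf.negOcc x φ ∧ MuLf.negOcc x ψ
  | .dia _ _ φ => MuLf.negOcc x φ
  | .box _ _ φ => MuLf.negOcc x φ
  | .var y => y ≠ x
  | .mu y φ => y = x ∨ MuLf.negOcc x φ
  | .nu y φ => y = x ∨ MuLf.negOcc x φ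
end

/-- Well-formedness: fixpoint-bound variables occur positively. -/
def MuLf.wf : MuLf A X P → Prop
  | .bot => True
  | .top => True
  | .neg φ => MuLf.wf φ
  | .or φ ψ => MuLf.wf φ ∧ MuLf.wf ψ
  | .and φ ψ => MuLf.wf φ ∧ MuLf.wf ψ
  | .dia _ _ φ => MuLf.wf φ
  | .box _ _ φ => MuLf.wf φ
  | .var _ => True
  | .mu x φ => MuLf.posIn x φ ∧ MuLf.wf φ
  | .nu x φ => MuLf.posIn x φ ∧ MuLf.wf φ

/-- Substitution φ[¬X/X] of ¬X for the free occurrences of X. -/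
def MuLf.substNegVar [DecidableEq X] (x : X) : MuLf A X P → MuLf A X P
  | .bot => .bot
  | .top => .top
  | .neg φ => .neg (MuLf.substNegVar x φ)
  | .or φ ψ => .or (MuLf.substNegVar x φ) (MuLf.substNegVar x ψ)
  | .and φ ψ => .and (MuLf.substNegVar x φ) (MuLf.substNegVar x ψ)
  | .dia a χ φ => .dia a χ (MuLf.substNegVar x φ)
  | .box a χ φ => .box a χ (MuLf.substNegVar x φ)
  | .var y => if y = x then .neg (.var y) else .var y
  | .mu y φ => if y = x then .mu y φ else .mu y (MuLf.substNegVar x φ)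
  | .nu y φ => if y = x then .nu y φ else .nu y (MuLf.substNegVar x φ)

/-- Projection from state-family sets to state-product sets. -/
def fp {S P : Type} (W : Set (S × Set P)) : Set (S × P) :=
  {sp | ∃ Pf : Set P, (sp.1, Pf) ∈ W ∧ sp.2 ∈ Pf}

theorem preimage_kernImage_of_injective {α β : Type} {e : α → β}
    (he : Function.Injective e) (U : Set α) : e ⁻¹' Set.kernImage e U = U := by
  rw [Set.kernImage_eq_compl, Set.preimage_compl, he.preimage_image, compl_compl]

section Fixpoints

variable {α β : Type} {e : α → β} {f : Set β → Set β} {g : Set α → Set α}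

theorem preimage_slfp (he : Function.Injective e) (hfg : ∀ V, e ⁻¹' f V = g (e ⁻¹' V)) :
    e ⁻¹' slfp f = slfp g := by
  apply subset_antisymm
  · intro a ha U hU
    have hV : f (Set.kernImage e U) ⊆ Set.kernImage e U := by
      rw [← Set.preimage_kernImage.le_iff_le, hfg, preimage_kernImage_of_injective he U]
      exact hU
    have ha' : a ∈ e ⁻¹' Set.kernImage e U := ha _ hV
    rwa [preimage_kernImage_of_injective he U] at ha'
  · intro a ha V hV
    have hU : g (e ⁻¹' V) ⊆ e ⁻¹' V := by
      rw [← hfg]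
      exact Set.preimage_mono hV
    exact ha _ hU

theorem preimage_sgfp (he : Function.Injective e) (hfg : ∀ V, e ⁻¹' f V = g (e ⁻¹' V)) :
    e ⁻¹' sgfp f = sgfp g := by
  apply subset_antisymm
  · rintro a ⟨V, hV, ha⟩
    have hU : e ⁻¹' V ⊆ g (e ⁻¹' V) := by
      rw [← hfg]
      exact Set.preimage_mono hV
    exact ⟨_, hU, ha⟩
  · rintro a ⟨U, hU, ha⟩
    have hV : e '' U ⊆ f (e '' U) := by
      rw [Set.image_subset_iff, hfg, he.preimage_image]
      exact hU
    exact ⟨_, hV, a, ha, rfl⟩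

end Fixpoints

variable [DecidableEq X]

theorem preimage_sem (F : FTS S A P) (p : P) (φ : MuLf A X P) (η : X → Set (S × P)) :
    (·, p) ⁻¹' MuLf.sem F φ η = MuL.sem (F.proj p) (φ.sm p) (Set.preimage (·, p) ∘ η) := by
  induction φ generalizing η with
  | bot | top | var => rfl
  | neg φ ih => simp only [MuLf.sem, MuLf.sm, MuL.sem, Set.preimage_compl, ih]
  | or φ ψ ihφ ihψ => simp only [MuLf.sem, MuLf.sm, MuL.sem, Set.preimage_union, ihφ, ihψ]
  | and φ ψ ihφ ihψ => simp only [MuLf.sem, MuLf.sm, MuL.sem, Set.preimage_inter, ihφ, ihψ]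
  | dia a χ φ ih =>
    by_cases hp : p ∈ χ
    · simp only [MuLf.sm, hp, if_true, MuL.sem, ← ih]
      ext s
      simp [MuLf.sem, FTS.proj, hp]
    · ext s
      simp [MuLf.sem, MuLf.sm, MuL.sem, hp]
  | box a χ φ ih =>
    by_cases hp : p ∈ χ
    · simp only [MuLf.sm, hp, if_true, MuL.sem, ← ih]
      ext s
      simp [MuLf.sem, FTS.proj, hp]
    · ext s
      simp [MuLf.sem, MuLf.sm, MuL.sem, hp]
  | mu x φ ih =>
    refine preimage_slfp (Prod.mk_left_injective p) fun V => ?_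
    rw [ih, Function.comp_update]
  | nu x φ ih =>
    refine preimage_sgfp (Prod.mk_left_injective p) fun V => ?_
    rw [ih, Function.comp_update]

theorem preimage_fsem_singleton (F : FTS S A P) (p : P) (φ : MuLf A X P)
    (ζ : X → Set (S × Set P)) :
    (·, {p}) ⁻¹' MuLf.fsem F φ ζ =
      MuL.sem (F.proj p) (φ.sm p) (Set.preimage (·, ({p} : Set P)) ∘ ζ) := by
  induction φ generalizing ζ with
  | bot | top | var => rfl
  | neg φ ih => simp only [MuLf.fsem, MuLf.sm, MuL.sem, Set.preimage_compl, ih]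
  | or φ ψ ihφ ihψ => simp only [MuLf.fsem, MuLf.sm, MuL.sem, Set.preimage_union, ihφ, ihψ]
  | and φ ψ ihφ ihψ => simp only [MuLf.fsem, MuLf.sm, MuL.sem, Set.preimage_inter, ihφ, ihψ]
  | dia a χ φ ih =>
    by_cases hp : p ∈ χ
    · simp only [MuLf.sm, hp, if_true, MuL.sem, ← ih]
      ext s
      simp +contextual [MuLf.fsem, FTS.proj, hp]
      exact exists_congr fun t => and_congr_right fun hθ => by rw [Set.singleton_inter_of_mem hθ]
    · ext s
      simp [MuLf.fsem, MuLf.sm, MuL.sem, hp]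
  | box a χ φ ih =>
    by_cases hp : p ∈ χ
    · simp only [MuLf.sm, hp, if_true, MuL.sem, ← ih]
      ext s
      simp +contextual [MuLf.fsem, FTS.proj, hp]
    · ext s
      simp [MuLf.fsem, MuLf.sm, MuL.sem, hp]
  | mu x φ ih =>
    refine preimage_slfp (Prod.mk_left_injective {p}) fun V => ?_
    rw [ih, Function.comp_update]
  | nu x φ ih =>
    refine preimage_sgfp (Prod.mk_left_injective {p}) fun V => ?_
    rw [ih, Function.comp_update]

/-- {p} ⊨'_F φ' iff p ⊨_F fm(φ') for closed φ' (fm is the identity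
on our shared syntax, replacing ⟪a|χ⟫ by ⟨a|χ⟩). -/
theorem stmt5 {S A X P : Type} [DecidableEq X] (F : FTS S A P)
    (phi : MuLf A X P) (hclosed : MuLf.closed phi) (p : P) :
    (F.init, ({p} : Set P)) ∈ MuLf.fsem F phi (fun _ => (∅ : Set (S × Set P))) ↔
      (F.init, p) ∈ MuLf.sem F phi (fun _ => (∅ : Set (S × P))) := by
  rw [← Set.mem_preimage (f := (·, ({p} : Set P))), preimage_fsem_singleton,
    ← Set.mem_preimage (f := (·, p)), preimage_sem]
  simp only [Function.comp_def, Set.preimage_empty]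

end SPLmu
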